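/- arXiv:2302.03643 — 2 statements merged into one kernel-verified Lean document; each statement's English description precedes it below -/
import Mathlib

section
/- Let α be a snowy weak composition and i an index with α_i > α_{i+1}. Then rajcode(s_i α) = s_i(rajcode(α)) + e_i, where s_i swaps the i-th and (i+1)-th entries of a weak composition, and e_i is the weak composition with 1 in position i and 0 elsewhere. -/
open scoped Classical

noncomputable section

/-- A weak composition: a finitely supported sequence of naturals.  Indices are
thought of as positive integers; index `0` is required to satisfy `α 0 = 0`. -/
abbrev WeakComp := ℕ →₀ ℕ

/-- A weak composition is snowy if its positive entries are pairwise distinct. -/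
def Snowy (α : WeakComp) : Prop :=
  ∀ r r', 0 < α r → α r = α r' → r = r'

/-- The key diagram of a weak composition: the left-justified diagram with
`α r` cells in row `r` (columns `1, …, α r`). -/
def keyDiagram (α : WeakComp) : Finset (ℕ × ℕ) :=
  α.support.biUnion fun r => (Finset.Icc 1 (α r)).image fun c => (r, c)

/-- Largest row index occurring in a diagram. -/
def rowBound (D : Finset (ℕ × ℕ)) : ℕ := (D.image Prod.fst).sup id

/-- One step of the snow-diagram algorithm: in row `r`, mark as a dark cloud the
rightmost cell of `D` whose column contains no dark cloud of `S` yet. -/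
def darkStep (D S : Finset (ℕ × ℕ)) (r : ℕ) : Finset (ℕ × ℕ) :=
  let cols := (D.filter fun p => p.1 = r ∧ ∀ q ∈ S, q.2 ≠ p.2).image Prod.snd
  if h : cols.Nonempty then insert (r, cols.max' h) S else S

/-- Process rows `N, N-1, …, N-k+1` from bottom to top. -/
def darkAux (D : Finset (ℕ × ℕ)) (N : ℕ) : ℕ → Finset (ℕ × ℕ)
  | 0 => ∅
  | k + 1 => darkStep D (darkAux D N k) (N - k)

/-- The dark cloud diagram of a diagram `D`: iterate the rows of `D` from bottom
to top, marking in each row the rightmost cell whose column contains no dark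
cloud from a lower row. -/
def dark (D : Finset (ℕ × ℕ)) : Finset (ℕ × ℕ) := darkAux D (rowBound D) (rowBound D)

/-- The underlying diagram of the snow diagram of `D`: the cells of `D` together
with all (snowflake) positions above a dark cloud in its column. -/
def snow (D : Finset (ℕ × ℕ)) : Finset (ℕ × ℕ) :=
  D ∪ (dark D).biUnion fun p => (Finset.Icc 1 p.1).image fun r => (r, p.2)

/-- `rajcode` of a diagram: the number of cells in row `r` of its snow diagram. -/
def rajcodeD (D : Finset (ℕ × ℕ)) (r : ℕ) : ℕ :=
  ((snow D).filter fun p => p.1 = r).card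

/-- `raj` of a diagram: the total number of cells of its snow diagram. -/
def rajD (D : Finset (ℕ × ℕ)) : ℕ := (snow D).card

/-- `rajcode` of a weak composition. -/
def rajcode (α : WeakComp) (r : ℕ) : ℕ := rajcodeD (keyDiagram α) r

/-- `raj` of a weak composition. -/
def raj (α : WeakComp) : ℕ := rajD (keyDiagram α)

/-- Non-attacking rook diagram: a finite subset of `ℤ_{>0} × ℤ_{>0}` with at
most one cell in each row and at most one cell in each column. -/
def IsRook (R : Finset (ℕ × ℕ)) : Prop :=
  (∀ p ∈ R, 1 ≤ p.1 ∧ 1 ≤ p.2) ∧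
    ∀ p ∈ R, ∀ q ∈ R, (p.1 = q.1 ∨ p.2 = q.2) → p = q

/-- The sum `|α|` of the entries of a weak composition. -/
def wsum (α : WeakComp) : ℕ := α.sum fun _ v => v

/-- The number of pairs `(r, r')` with `1 ≤ r < r'` and `α r < α r'`. -/
def invCount (α : WeakComp) : ℕ :=
  ((Finset.Icc 1 (α.support.sup id) ×ˢ α.support).filter fun p =>
      p.1 < p.2 ∧ α p.1 < α p.2).card

/-- Swap entries `i` and `i+1` of a weak composition. -/
def swapEntries (i : ℕ) (α : WeakComp) : WeakComp :=
  Finsupp.equivMapDomain (Equiv.swap i (i + 1)) α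

/-- The Rothe diagram of `w ∈ S_n`, in 1-based coordinates:
`{(r, w(r')) : r < r', w(r) > w(r')}`. -/
def rothe {n : ℕ} (w : Equiv.Perm (Fin n)) : Finset (ℕ × ℕ) :=
  (Finset.univ.filter fun p : Fin n × Fin n => p.1 < p.2 ∧ w p.2 < w p.1).image
    fun p => ((p.1 : ℕ) + 1, (w p.2 : ℕ) + 1)

/-- Length of the longest increasing subsequence of `w` starting at position `r`
(equivalently, starting with the value `w r`). -/
def LISfrom {n : ℕ} (w : Equiv.Perm (Fin n)) (r : Fin n) : ℕ :=
  Finset.sup (Finset.univ.filter fun s : Finset (Fin n) =>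
      r ∈ s ∧ (∀ i ∈ s, r ≤ i) ∧ ∀ i ∈ s, ∀ j ∈ s, i < j → w i < w j)
    Finset.card

/-- Insert `x` into a strictly decreasing row: replace the largest entry `< x`
(returning it as bumped), or append `x` at the end. -/
def insertRow : List ℕ → ℕ → List ℕ × Option ℕ
  | [], x => ([x], none)
  | a :: t, x =>
      if a < x then (x :: t, some a)
      else (a :: (insertRow t x).1, (insertRow t x).2)

/-- The 1-based value of `w` at 0-based position `i` (0 if out of range). -/
def oneline {n : ℕ} (w : Equiv.Perm (Fin n)) (i : ℕ) : ℕ :=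
  if h : i < n then (w ⟨i, h⟩ : ℕ) + 1 else 0

/-- Row one of the Schensted insertion tableau after the first `k` insertions of
the values `w(n), w(n-1), …` (1-based values, inserted from the last position). -/
def rowOneAux {n : ℕ} (w : Equiv.Perm (Fin n)) : ℕ → List ℕ
  | 0 => []
  | k + 1 => (insertRow (rowOneAux w k) (oneline w (n - 1 - k))).1

/-- The value bumped from row one when the value `w r` is inserted (during the
Schensted insertion of `w(n), …, w(1)` into the empty tableau); `none` if `w r`
is appended at the end of row one. -/
def bumpedFromRowOne {n : ℕ} (w : Equiv.Perm (Fin n)) (r : Fin n) : Option ℕ :=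
  (insertRow (rowOneAux w (n - 1 - (r : ℕ))) (oneline w (r : ℕ))).2

/-- Position `i` starts a maximal decreasing run of `u` (in one-line notation). -/
def IsRunStart {n : ℕ} (u : Equiv.Perm (Fin n)) (i : Fin n) : Prop :=
  ∀ j : Fin n, (j : ℕ) + 1 = (i : ℕ) → u j < u i

/-- A fireworks permutation: the initial elements of its maximal decreasing runs
are increasing. -/
def Fireworks {n : ℕ} (u : Equiv.Perm (Fin n)) : Prop :=
  ∀ i j : Fin n, IsRunStart u i → IsRunStart u j → i < j → u i < u j

/-- An inverse fireworks permutation. -/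
def InverseFireworks {n : ℕ} (w : Equiv.Perm (Fin n)) : Prop := Fireworks w⁻¹

/-- The `n`-th Bell number: the number of set partitions (equivalence relations)
of an `n`-element set. -/
def bell (n : ℕ) : ℕ := Nat.card (Setoid (Fin n))

/-- The staircase board `Stair_n = {(r,c) : 1 ≤ r ≤ n-1, 1 ≤ c ≤ n-r}`. -/
def stair (n : ℕ) : Finset (ℕ × ℕ) :=
  (Finset.Icc 1 n ×ˢ Finset.Icc 1 n).filter fun p => p.1 ≤ n - 1 ∧ p.2 ≤ n - p.1

/-- All cells weakly above a rook of `R` in its column, or weakly to the left of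
a rook of `R` in its row. -/
def hooks (R : Finset (ℕ × ℕ)) : Finset (ℕ × ℕ) :=
  R.biUnion fun p =>
    ((Finset.Icc 1 p.1).image fun r => (r, p.2)) ∪
      ((Finset.Icc 1 p.2).image fun c => (p.1, c))

/-- The Northwest number `NW(R)`. -/
def NW (R : Finset (ℕ × ℕ)) : ℕ := (hooks R).card

/-- The Garsia–Remmel statistic: the number of cells of `Stair_n` that are not
weakly above a rook in its column and not weakly to the left of a rook in its
row. -/
def GRcount (n : ℕ) (R : Finset (ℕ × ℕ)) : ℕ :=
  ((stair n).filter fun q =>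
      ¬ ∃ p ∈ R, (p.2 = q.2 ∧ q.1 ≤ p.1) ∨ (p.1 = q.1 ∧ q.2 ≤ p.2)).card

/-- Garsia–Remmel `q`-Stirling numbers of the second kind. -/
def qStirling : ℕ → ℕ → Polynomial ℤ
  | 0, 0 => 1
  | 0, _ + 1 => 0
  | _ + 1, 0 => 0
  | n + 1, k + 1 =>
      Polynomial.X ^ k * qStirling n k +
        (∑ i ∈ Finset.range (k + 1), Polynomial.X ^ i) * qStirling n (k + 1)

/-- The `q`-Bell polynomial `B_n(q) = Σ_{k=0}^n S_{n,k}(q)`. -/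
def qBell (n : ℕ) : Polynomial ℤ := ∑ k ∈ Finset.range (n + 1), qStirling n k

/-- Tail lexicographic order on exponent vectors: `γ < α` iff there is `k` with
`γ k < α k` and `γ j = α j` for all `j > k`. -/
def TailLt (γ α : ℕ →₀ ℕ) : Prop :=
  ∃ k, γ k < α k ∧ ∀ j, k < j → γ j = α j

/-! Since the positive entries of `α` are distinct, the snow-diagram algorithm puts the dark cloud
of each nonzero row `r ≥ 1` at the end of that row, in column `α r`. Hence row `r ≥ 1` of the snow
diagram consists of the `α r` cells of the key diagram together with one snowflake in column `α s`
for every `s > r` with `α s > α r`: this is the formula `rajcode(α)_r = α_r + #{s > r : α_r < α_s}`.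
Swapping `α i > α (i + 1)` preserves all the comparisons in this count except one: the row
carrying the value `α i` now lies below row `i` and contributes a snowflake to it. -/

lemma mem_keyDiagram {α : WeakComp} {p : ℕ × ℕ} :
    p ∈ keyDiagram α ↔ 1 ≤ p.2 ∧ p.2 ≤ α p.1 := by
  obtain ⟨r, c⟩ := p
  simp only [keyDiagram, Finset.mem_biUnion, Finset.mem_image, Finset.mem_Icc, Prod.mk.injEq,
    Finsupp.mem_support_iff]
  constructor
  · rintro ⟨r, -, c, hc, rfl, rfl⟩
    exact hc
  · intro hc
    exact ⟨r, by omega, c, hc, rfl, rfl⟩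

lemma fst_le_rowBound {D : Finset (ℕ × ℕ)} {p : ℕ × ℕ} (hp : p ∈ D) : p.1 ≤ rowBound D :=
  Finset.le_sup (f := id) (Finset.mem_image_of_mem Prod.fst hp)

lemma darkStep_of_forall_ne {D S : Finset (ℕ × ℕ)} {r : ℕ}
    (h : ∀ p ∈ D, p.1 ≠ r) : darkStep D S r = S := by
  rw [darkStep, dif_neg]
  rintro ⟨c, hc⟩
  simp only [Finset.mem_image, Finset.mem_filter] at hc
  obtain ⟨p, ⟨hpD, hp1, -⟩, -⟩ := hc
  exact h p hpD hp1

lemma darkStep_eq_insert {D S : Finset (ℕ × ℕ)} {r c : ℕ} (hc : (r, c) ∈ D)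
    (hfree : ∀ q ∈ S, q.2 ≠ c) (hmax : ∀ p ∈ D, p.1 = r → p.2 ≤ c) :
    darkStep D S r = insert (r, c) S := by
  rw [darkStep]
  have hmem : c ∈ (D.filter fun p => p.1 = r ∧ ∀ q ∈ S, q.2 ≠ p.2).image Prod.snd := by
    simp only [Finset.mem_image, Finset.mem_filter]
    exact ⟨(r, c), ⟨hc, rfl, hfree⟩, rfl⟩
  rw [dif_pos ⟨c, hmem⟩]
  congr
  refine le_antisymm (Finset.max'_le _ _ _ ?_) (Finset.le_max' _ _ hmem)
  simp only [Finset.mem_image, Finset.mem_filter]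
  rintro _ ⟨p, ⟨hpD, hp1, -⟩, rfl⟩
  exact hmax p hpD hp1

lemma darkAux_keyDiagram {α : WeakComp} (hs : Snowy α) {N k : ℕ} (hk : k ≤ N) :
    darkAux (keyDiagram α) N k
      = ((Finset.Ioc (N - k) N).filter fun r => 0 < α r).image fun r => (r, α r) := by
  induction k with
  | zero => simp [darkAux]
  | succ k ih =>
    have hIoc : Finset.Ioc (N - (k + 1)) N = insert (N - k) (Finset.Ioc (N - k) N) := by
      ext r
      simp only [Finset.mem_Ioc, Finset.mem_insert]
      omega
    rw [darkAux, ih (by omega), hIoc, Finset.filter_insert]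
    split_ifs with hpos
    · rw [Finset.image_insert]
      apply darkStep_eq_insert (mem_keyDiagram.2 ⟨hpos, le_rfl⟩)
      · simp only [Finset.mem_image, Finset.mem_filter, Finset.mem_Ioc]
        rintro _ ⟨s, ⟨hs_Ioc, hs_pos⟩, rfl⟩ heq
        have := hs s (N - k) hs_pos heq
        omega
      · rintro p hp hrow
        exact hrow ▸ (mem_keyDiagram.1 hp).2
    · apply darkStep_of_forall_ne
      rintro p hp hrow
      have := hrow ▸ mem_keyDiagram.1 hp
      omega

lemma dark_keyDiagram {α : WeakComp} (hs : Snowy α) :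
    dark (keyDiagram α) = (α.support.filter (1 ≤ ·)).image fun r => (r, α r) := by
  rw [dark, darkAux_keyDiagram hs le_rfl, Nat.sub_self]
  congr 1
  ext r
  have hbound : 0 < α r → r ≤ rowBound (keyDiagram α) := fun h =>
    fst_le_rowBound (p := (r, α r)) (mem_keyDiagram.2 ⟨h, le_rfl⟩)
  simp only [Finset.mem_filter, Finset.mem_Ioc, Finsupp.mem_support_iff]
  constructor
  · rintro ⟨⟨h1, -⟩, h⟩
    exact ⟨by omega, h1⟩
  · rintro ⟨h, h1⟩
    exact ⟨⟨h1, hbound (by omega)⟩, by omega⟩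

lemma rajcode_zero (α : WeakComp) : rajcode α 0 = α 0 := by
  have hrow : (snow (keyDiagram α)).filter (·.1 = 0) = (Finset.Icc 1 (α 0)).image (0, ·) := by
    ext ⟨r, c⟩
    simp only [snow, Finset.mem_filter, Finset.mem_union, mem_keyDiagram, Finset.mem_biUnion,
      Finset.mem_image, Finset.mem_Icc, Prod.mk.injEq, ↓existsAndEq, true_and, Prod.exists,
      exists_eq_right_right]
    constructor
    · rintro ⟨h | ⟨_, -, hr, -⟩, rfl⟩
      · exact ⟨h, rfl⟩
      · omega
    · rintro ⟨h, rfl⟩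
      exact ⟨Or.inl h, rfl⟩
  rw [rajcode, rajcodeD, hrow, Finset.card_image_of_injective _ (Prod.mk_right_injective 0),
    Nat.card_Icc, Nat.add_sub_cancel]

lemma snow_keyDiagram_row {α : WeakComp} (hs : Snowy α) {r : ℕ} (hr : 1 ≤ r) :
    (snow (keyDiagram α)).filter (·.1 = r)
      = (Finset.Icc 1 (α r) ∪ (α.support.filter fun s => r < s ∧ α r < α s).image α).image
          (r, ·) := by
  ext ⟨r', c⟩
  simp only [snow, dark_keyDiagram hs, Finset.mem_filter, Finset.mem_union, mem_keyDiagram,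
    Finset.mem_biUnion, Finset.mem_image, Finsupp.mem_support_iff, ne_eq, Finset.mem_Icc,
    Prod.mk.injEq, ↓existsAndEq, true_and, exists_exists_and_eq_and, exists_eq_right_right]
  constructor
  · rintro ⟨h | ⟨s, ⟨hs0, -⟩, ⟨-, hrs⟩, rfl⟩, rfl⟩
    · exact ⟨Or.inl h, rfl⟩
    · refine ⟨?_, rfl⟩
      by_cases hle : α s ≤ α r'
      · exact Or.inl ⟨by omega, hle⟩
      · have : r' ≠ s := by rintro rfl; omega
        exact Or.inr ⟨s, ⟨hs0, by omega, by omega⟩, rfl⟩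
  · rintro ⟨h | ⟨s, ⟨hs0, hrs, -⟩, rfl⟩, rfl⟩
    · exact ⟨Or.inl h, rfl⟩
    · exact ⟨Or.inr ⟨s, ⟨hs0, by omega⟩, ⟨hr, hrs.le⟩, rfl⟩, rfl⟩

lemma rajcode_eq_of_snowy {α : WeakComp} (hs : Snowy α) {r : ℕ} (hr : 1 ≤ r) :
    rajcode α r = α r + (α.support.filter fun s => r < s ∧ α r < α s).card := by
  rw [rajcode, rajcodeD, snow_keyDiagram_row hs hr,
    Finset.card_image_of_injective _ (Prod.mk_right_injective r), Finset.card_union_of_disjoint,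
    Nat.card_Icc, Nat.add_sub_cancel, Finset.card_image_of_injOn]
  · intro a ha b _ hab
    have := (Finset.mem_filter.1 ha).2.2
    exact hs a b (by omega) hab
  · simp only [Finset.disjoint_left, Finset.mem_Icc, Finset.mem_image, Finset.mem_filter,
      not_exists, not_and]
    rintro c ⟨-, hc⟩ s ⟨-, -, hlt⟩ rfl
    omega

lemma Snowy.equivMapDomain {α : WeakComp} (hs : Snowy α) (e : ℕ ≃ ℕ) :
    Snowy (Finsupp.equivMapDomain e α) := fun _ _ hpos heq =>
  e.symm.injective (hs _ _ hpos heq)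

lemma Finsupp.card_filter_support_equivMapDomain {ι κ M : Type*} [Zero M] (e : ι ≃ κ)
    (f : ι →₀ M) (p : κ → Prop) [DecidablePred p] :
    ((f.equivMapDomain e).support.filter p).card = (f.support.filter fun s => p (e s)).card := by
  rw [show (f.equivMapDomain e).support = f.support.map e.toEmbedding from rfl,
    Finset.filter_map, Finset.card_map]
  rfl

lemma card_filter_lt_swap {α : WeakComp} {i : ℕ} (hlt : α (i + 1) < α i) (r : ℕ) :
    (α.support.filter fun s =>
        r < Equiv.swap i (i + 1) s ∧ α (Equiv.swap i (i + 1) r) < α s).card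
      = (α.support.filter fun s =>
          Equiv.swap i (i + 1) r < s ∧ α (Equiv.swap i (i + 1) r) < α s).card
        + if r = i then 1 else 0 := by
  split_ifs with hri
  · subst hri
    rw [← Finset.card_insert_of_notMem (a := r) (by simp)]
    congr 1
    ext s
    simp only [Finset.mem_insert, Finset.mem_filter, Equiv.swap_apply_def, Finsupp.mem_support_iff]
    split_ifs <;> subst_vars <;> omega
  · rw [Nat.add_zero]
    congr 1
    refine Finset.filter_congr fun s _ => ?_
    simp only [Equiv.swap_apply_def]
    split_ifs <;> subst_vars <;> omega

theorem rajcode_swap_of_snowy_general (α : WeakComp) (i : ℕ) (hs : Snowy α)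
    (hi : 1 ≤ i) (hlt : α (i + 1) < α i) :
    ∀ r : ℕ, rajcode (swapEntries i α) r
      = rajcode α (Equiv.swap i (i + 1) r) + (if r = i then 1 else 0) := by
  intro r
  rcases Nat.eq_zero_or_pos r with rfl | hr
  · have hσ0 : Equiv.swap i (i + 1) 0 = 0 := Equiv.swap_apply_of_ne_of_ne (by omega) (by omega)
    rw [hσ0, rajcode_zero, rajcode_zero, if_neg (by omega)]
    simp [swapEntries, hσ0]
  · have hσr : 1 ≤ Equiv.swap i (i + 1) r := by
      rw [Equiv.swap_apply_def]
      split_ifs <;> omega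
    rw [swapEntries, rajcode_eq_of_snowy (hs.equivMapDomain _) hr, rajcode_eq_of_snowy hs hσr,
      Finsupp.card_filter_support_equivMapDomain]
    simp only [Finsupp.equivMapDomain_apply, Equiv.symm_swap, Equiv.swap_apply_self]
    rw [card_filter_lt_swap hlt, add_assoc]

/-- for snowy `α` with `α_i > α_{i+1}`,
`rajcode(s_i α) = s_i(rajcode α) + e_i`. -/
theorem rajcode_swap_of_snowy (α : WeakComp) (i : ℕ) (h0 : α 0 = 0) (hs : Snowy α)
    (hi : 1 ≤ i) (hlt : α (i + 1) < α i) :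
    ∀ r : ℕ, rajcode (swapEntries i α) r
      = rajcode α (Equiv.swap i (i + 1) r) + (if r = i then 1 else 0) :=
  rajcode_swap_of_snowy_general α i hs hi hlt

end
end

section
/- Perform Schensted insertion (with decreasing rows and columns) of the values w(n), w(n−1), ..., w(1), in that order, into an initially empty partial tableau. For each r ∈ [n]: if w(r) is appended to the end of row one (bumps nothing), then row r of snow(RD(w)) contains no dark cloud; if w(r) bumps value c from row one, then (r,c) is a dark cloud of snow(RD(w)). -/
open scoped Classical

noncomputable section

/-!
Insert the values from the right while processing the rows of `RD(w)` from the bottom. Once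
`w(r+1), …, w(n)` have been inserted and the rows below `r` processed, the columns containing a
dark cloud are exactly the inserted values that are no longer in row one. Row `r` of `RD(w)`
consists of the inserted values smaller than `w(r)`, so its cells in free columns are the entries
of row one smaller than `w(r)`: the rightmost of them is the entry that `w(r)` bumps, and there is
none exactly when `w(r)` is appended.
-/

section InsertRow

variable {l : List ℕ} {x a c : ℕ}

lemma mem_insertRow_fst (h : a ∈ (insertRow l x).1) : a = x ∨ a ∈ l := by
  induction l with
  | nil => simpa [insertRow] using h
  | cons b t ih =>
    by_cases hb : b < x
    · simp only [insertRow, if_pos hb, List.mem_cons] at h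
      tauto
    · simp only [insertRow, if_neg hb, List.mem_cons] at h
      rcases h with rfl | h
      · exact Or.inr List.mem_cons_self
      · exact (ih h).imp_right (List.mem_cons_of_mem b)

lemma pairwise_insertRow (hl : l.Pairwise (· > ·)) (hx : x ∉ l) :
    (insertRow l x).1.Pairwise (· > ·) := by
  induction l with
  | nil => simp [insertRow]
  | cons b t ih =>
    obtain ⟨hbt, ht⟩ := List.pairwise_cons.mp hl
    have hxt : x ∉ t := fun h => hx (List.mem_cons_of_mem b h)
    by_cases hb : b < x
    · simp only [insertRow, if_pos hb]
      exact List.pairwise_cons.mpr ⟨fun a ha => (hbt a ha).trans hb, ht⟩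
    · simp only [insertRow, if_neg hb]
      refine List.pairwise_cons.mpr ⟨fun a ha => ?_, ih ht hxt⟩
      rcases mem_insertRow_fst ha with rfl | ha
      · exact lt_of_le_of_ne (not_lt.mp hb) (by rintro rfl; exact hx List.mem_cons_self)
      · exact hbt a ha

lemma insertRow_of_snd_eq_none (h : (insertRow l x).2 = none) :
    (insertRow l x).1 = l ++ [x] ∧ ∀ a ∈ l, ¬ a < x := by
  induction l with
  | nil => simp [insertRow]
  | cons b t ih =>
    by_cases hb : b < x
    · simp [insertRow, hb] at h
    · simp only [insertRow, if_neg hb] at h ⊢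
      obtain ⟨heq, ht⟩ := ih h
      exact ⟨by rw [heq, List.cons_append], List.forall_mem_cons.mpr ⟨hb, ht⟩⟩

lemma insertRow_of_snd_eq_some (hl : l.Pairwise (· > ·)) (h : (insertRow l x).2 = some c) :
    IsGreatest {a | a ∈ l ∧ a < x} c ∧
      (insertRow l x).1.toFinset = insert x (l.toFinset.erase c) := by
  induction l with
  | nil => simp [insertRow] at h
  | cons b t ih =>
    obtain ⟨hbt, ht⟩ := List.pairwise_cons.mp hl
    by_cases hb : b < x
    · simp only [insertRow, if_pos hb, Option.some.injEq] at h
      subst h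
      refine ⟨⟨⟨List.mem_cons_self, hb⟩, fun a ⟨ha, _⟩ => ?_⟩, ?_⟩
      · rcases List.mem_cons.mp ha with rfl | ha
        exacts [le_rfl, (hbt a ha).le]
      · ext a
        simp only [insertRow, if_pos hb, List.toFinset_cons, Finset.mem_insert,
          Finset.mem_erase, List.mem_toFinset]
        have := fun h : a ∈ t => (hbt a h).ne
        tauto
    · simp only [insertRow, if_neg hb] at h ⊢
      obtain ⟨⟨⟨hct, hcx⟩, hgt⟩, heq⟩ := ih ht h
      refine ⟨⟨⟨List.mem_cons_of_mem b hct, hcx⟩, fun a ⟨ha, hax⟩ => ?_⟩, ?_⟩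
      · rcases List.mem_cons.mp ha with rfl | ha
        exacts [absurd hax hb, hgt ⟨ha, hax⟩]
      · have hbc : b ≠ c := by rintro rfl; exact hb hcx
        rw [List.toFinset_cons, heq, List.toFinset_cons, Finset.erase_insert_of_ne hbc,
          Finset.insert_comm]

end InsertRow

section DarkClouds

variable {D S : Finset (ℕ × ℕ)} {N r c : ℕ}

lemma mem_darkStep_candidates {v : ℕ} :
    v ∈ (D.filter fun p => p.1 = r ∧ ∀ q ∈ S, q.2 ≠ p.2).image Prod.snd ↔
      (r, v) ∈ D ∧ v ∉ S.image Prod.snd := by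
  simp only [Finset.mem_image, Finset.mem_filter, not_exists, not_and]
  constructor
  · rintro ⟨⟨r', v'⟩, ⟨hD, rfl, hS⟩, rfl⟩
    exact ⟨hD, hS⟩
  · rintro ⟨hD, hS⟩
    exact ⟨(r, v), ⟨hD, rfl, hS⟩, rfl⟩

lemma darkStep_eq_self (h : ∀ v, (r, v) ∈ D → v ∈ S.image Prod.snd) :
    darkStep D S r = S := by
  rw [darkStep, dif_neg]
  rintro ⟨v, hv⟩
  obtain ⟨hD, hS⟩ := mem_darkStep_candidates.mp hv
  exact hS (h v hD)

lemma darkStep_eq_insert_s12 (h : IsGreatest {v | (r, v) ∈ D ∧ v ∉ S.image Prod.snd} c) :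
    darkStep D S r = insert (r, c) S := by
  have hc := mem_darkStep_candidates.mpr h.1
  rw [darkStep, dif_pos ⟨c, hc⟩]
  congr
  exact le_antisymm (Finset.max'_le _ _ _ fun v hv => h.2 (mem_darkStep_candidates.mp hv))
    (Finset.le_max' _ _ hc)

lemma mem_darkStep_iff_of_fst_ne {p : ℕ × ℕ} (hp : p.1 ≠ r) :
    p ∈ darkStep D S r ↔ p ∈ S := by
  simp only [darkStep]
  split
  · rw [Finset.mem_insert, or_iff_right (by rintro rfl; exact hp rfl)]
  · rfl

lemma lt_fst_add_of_mem_darkAux {k : ℕ} {p : ℕ × ℕ} (hp : p ∈ darkAux D N k) :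
    N < p.1 + k := by
  induction k with
  | zero => simp [darkAux] at hp
  | succ k ih =>
    by_cases hpr : p.1 = N - k
    · omega
    · exact (ih ((mem_darkStep_iff_of_fst_ne hpr).mp hp)).trans (by omega)

-- Rows are processed bottom to top, so a row is final once it has been processed.
lemma mem_darkAux_iff_of_le {k m : ℕ} {p : ℕ × ℕ} (hkm : k ≤ m) (hp : N - k < p.1) :
    p ∈ darkAux D N m ↔ p ∈ darkAux D N k := by
  induction m, hkm using Nat.le_induction with
  | base => rfl
  | succ m hkm ih => rw [← ih]; exact mem_darkStep_iff_of_fst_ne (by omega)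

lemma darkAux_succ_succ_of_row_empty (h : ∀ c, (N + 1, c) ∉ D) (k : ℕ) :
    darkAux D (N + 1) (k + 1) = darkAux D N k := by
  induction k with
  | zero => exact darkStep_eq_self fun v hv => absurd hv (h v)
  | succ k ih =>
    change darkStep D (darkAux D (N + 1) (k + 1)) (N + 1 - (k + 1)) = _
    rw [ih, Nat.add_sub_add_right]
    rfl

lemma le_rowBound {p : ℕ × ℕ} (hp : p ∈ D) : p.1 ≤ rowBound D :=
  Finset.le_sup (f := id) (Finset.mem_image_of_mem Prod.fst hp)

lemma darkAux_eq_dark {M : ℕ} (hM : rowBound D ≤ M) : darkAux D M M = dark D := by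
  induction M, hM using Nat.le_induction with
  | base => rfl
  | succ M hM ih =>
    have hempty : ∀ c, (M + 1, c) ∉ D := fun c hc => by
      have := le_rowBound hc
      simp only at this
      omega
    rw [darkAux_succ_succ_of_row_empty hempty, ih]

end DarkClouds

/-- Row one `T` and the dark clouds `S` once the values `V` have been inserted. -/
structure DarkInvariant (T : List ℕ) (S : Finset (ℕ × ℕ)) (V : Finset ℕ) : Prop where
  sorted : T.Pairwise (· > ·)
  subset : T.toFinset ⊆ V
  image_snd : S.image Prod.snd = V \ T.toFinset

namespace DarkInvariant

variable {T : List ℕ} {S D : Finset (ℕ × ℕ)} {V : Finset ℕ} {r x : ℕ}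

lemma notMem_image_snd_iff (h : DarkInvariant T S V) {v : ℕ} (hv : v ∈ V) :
    v ∉ S.image Prod.snd ↔ v ∈ T := by
  rw [h.image_snd, Finset.mem_sdiff, List.mem_toFinset]
  tauto

lemma darkStep_eq (h : DarkInvariant T S V) (hrow : ∀ v, (r, v) ∈ D ↔ v ∈ V ∧ v < x) :
    darkStep D S r = (insertRow T x).2.elim S fun c => insert (r, c) S := by
  have hcand : ∀ v, (r, v) ∈ D ∧ v ∉ S.image Prod.snd ↔ v ∈ T ∧ v < x := by
    intro v
    rw [hrow]
    constructor
    · rintro ⟨⟨hv, hvx⟩, hS⟩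
      exact ⟨(h.notMem_image_snd_iff hv).mp hS, hvx⟩
    · rintro ⟨hT, hvx⟩
      have hv : v ∈ V := h.subset (List.mem_toFinset.mpr hT)
      exact ⟨⟨hv, hvx⟩, (h.notMem_image_snd_iff hv).mpr hT⟩
  cases hbump : (insertRow T x).2 with
  | none =>
    refine darkStep_eq_self fun v hv => ?_
    by_contra hS
    obtain ⟨hT, hvx⟩ := (hcand v).mp ⟨hv, hS⟩
    exact (insertRow_of_snd_eq_none hbump).2 v hT hvx
  | some c =>
    have hgreatest := (insertRow_of_snd_eq_some h.sorted hbump).1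
    rw [← Set.ext hcand] at hgreatest
    exact darkStep_eq_insert_s12 hgreatest

lemma step (h : DarkInvariant T S V) (hx : x ∉ V)
    (hrow : ∀ v, (r, v) ∈ D ↔ v ∈ V ∧ v < x) :
    DarkInvariant (insertRow T x).1 (darkStep D S r) (insert x V) := by
  have hxT : x ∉ T := fun hxT => hx (h.subset (List.mem_toFinset.mpr hxT))
  refine ⟨pairwise_insertRow h.sorted hxT, fun a ha => ?_, ?_⟩
  · rcases mem_insertRow_fst (List.mem_toFinset.mp ha) with rfl | ha
    exacts [Finset.mem_insert_self a V,
      Finset.mem_insert_of_mem (h.subset (List.mem_toFinset.mpr ha))]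
  rw [h.darkStep_eq hrow]
  cases hbump : (insertRow T x).2 with
  | none =>
    rw [(insertRow_of_snd_eq_none hbump).1, Option.elim_none, h.image_snd, List.toFinset_append,
      List.toFinset_cons, List.toFinset_nil, Finset.union_insert, Finset.union_empty,
      Finset.insert_sdiff_insert, Finset.sdiff_insert_of_notMem hx]
  | some c =>
    obtain ⟨⟨⟨hcT, -⟩, -⟩, hrow'⟩ := insertRow_of_snd_eq_some h.sorted hbump
    have hcV : c ∈ V := h.subset (List.mem_toFinset.mpr hcT)
    rw [hrow', Option.elim_some, Finset.image_insert, h.image_snd]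
    ext v
    simp only [Finset.mem_insert, Finset.mem_sdiff, Finset.mem_erase, List.mem_toFinset]
    grind

end DarkInvariant

section Rothe

variable {n : ℕ} (w : Equiv.Perm (Fin n))

/-- The values `w(n-k+1), …, w(n)`, 1-based: those inserted in the first `k` steps. -/
def insertedValues (k : ℕ) : Finset ℕ :=
  (Finset.univ.filter fun j : Fin n => n - k ≤ (j : ℕ)).image fun j => (w j : ℕ) + 1

variable {w} {k v : ℕ}

lemma mem_insertedValues :
    v ∈ insertedValues w k ↔ ∃ j : Fin n, n - k ≤ (j : ℕ) ∧ (w j : ℕ) + 1 = v := by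
  simp [insertedValues]

lemma insertedValues_zero : insertedValues w 0 = ∅ := by
  ext v
  simp only [mem_insertedValues, Nat.sub_zero, Finset.notMem_empty, iff_false, not_exists, not_and]
  exact fun j hj => absurd j.2 (by omega)

lemma oneline_sub_one_sub (hk : k < n) :
    oneline w (n - 1 - k) = (w ⟨n - 1 - k, by omega⟩ : ℕ) + 1 :=
  dif_pos _

lemma insertedValues_succ (hk : k < n) :
    insertedValues w (k + 1) = insert (oneline w (n - 1 - k)) (insertedValues w k) := by
  ext v
  simp only [Finset.mem_insert, mem_insertedValues, oneline_sub_one_sub hk]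
  constructor
  · rintro ⟨j, hj, rfl⟩
    rcases (show n - k ≤ (j : ℕ) ∨ (j : ℕ) = n - 1 - k by omega) with hj | hj
    · exact Or.inr ⟨j, hj, rfl⟩
    · exact Or.inl (by rw [show j = ⟨n - 1 - k, by omega⟩ from Fin.ext hj])
  · rintro (rfl | ⟨j, hj, rfl⟩)
    exacts [⟨_, by simp only; omega, rfl⟩, ⟨j, by omega, rfl⟩]

lemma oneline_notMem_insertedValues (hk : k < n) :
    oneline w (n - 1 - k) ∉ insertedValues w k := by
  rw [mem_insertedValues, oneline_sub_one_sub hk]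
  rintro ⟨j, hj, hwj⟩
  have : j = ⟨n - 1 - k, by omega⟩ := w.injective (Fin.ext (by omega))
  exact absurd hj (by rw [this]; simp only; omega)

lemma mem_rothe_row_iff (i : Fin n) :
    ((i : ℕ) + 1, v) ∈ rothe w ↔ ∃ j, i < j ∧ w j < w i ∧ (w j : ℕ) + 1 = v := by
  simp only [rothe, Finset.mem_image, Finset.mem_filter, Finset.mem_univ, true_and, Prod.mk.injEq,
    add_left_inj, Fin.val_inj]
  constructor
  · rintro ⟨⟨i', j⟩, ⟨hij, hw⟩, rfl, rfl⟩
    exact ⟨j, hij, hw, rfl⟩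
  · rintro ⟨j, hij, hw, rfl⟩
    exact ⟨(i, j), ⟨hij, hw⟩, rfl, rfl⟩

lemma mem_rothe_iff (hk : k < n) :
    (n - k, v) ∈ rothe w ↔ v ∈ insertedValues w k ∧ v < oneline w (n - 1 - k) := by
  have hrow := mem_rothe_row_iff (w := w) (v := v) ⟨n - 1 - k, by omega⟩
  rw [show n - 1 - k + 1 = n - k by omega] at hrow
  rw [hrow, mem_insertedValues, oneline_sub_one_sub hk]
  constructor
  · rintro ⟨j, hij, hw, rfl⟩
    rw [Fin.lt_def, Fin.val_mk] at hij
    rw [Fin.lt_def] at hw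
    exact ⟨⟨j, by omega, rfl⟩, by omega⟩
  · rintro ⟨⟨j, hj, rfl⟩, hw⟩
    refine ⟨j, ?_, ?_, rfl⟩
    · rw [Fin.lt_def, Fin.val_mk]; omega
    · rw [Fin.lt_def]; omega

lemma rowBound_rothe_le : rowBound (rothe w) ≤ n := by
  refine Finset.sup_le fun b hb => ?_
  simp only [rothe, Finset.mem_image] at hb
  obtain ⟨_, ⟨⟨i, _⟩, _, rfl⟩, rfl⟩ := hb
  exact i.2

end Rothe

section Schensted

variable {n : ℕ} (w : Equiv.Perm (Fin n))

lemma darkInvariant_rowOneAux {k : ℕ} (hk : k ≤ n) :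
    DarkInvariant (rowOneAux w k) (darkAux (rothe w) n k) (insertedValues w k) := by
  induction k with
  | zero =>
    exact ⟨List.Pairwise.nil, by simp [rowOneAux], by simp [darkAux, insertedValues_zero]⟩
  | succ k ih =>
    rw [insertedValues_succ hk]
    exact (ih (by omega)).step (oneline_notMem_insertedValues hk) fun v => mem_rothe_iff hk

lemma darkStep_rothe_eq (r : Fin n) :
    darkStep (rothe w) (darkAux (rothe w) n (n - 1 - r)) ((r : ℕ) + 1) =
      (bumpedFromRowOne w r).elim (darkAux (rothe w) n (n - 1 - r))
        fun c => insert ((r : ℕ) + 1, c) (darkAux (rothe w) n (n - 1 - r)) := by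
  have hk : n - 1 - r < n := by omega
  have hrow : n - (n - 1 - r) = (r : ℕ) + 1 := by omega
  have hpos : n - 1 - (n - 1 - r) = r := by omega
  have := (darkInvariant_rowOneAux w hk.le).darkStep_eq fun v => mem_rothe_iff hk
  rwa [hrow, hpos] at this

lemma mem_dark_rothe_iff (r : Fin n) (c : ℕ) :
    ((r : ℕ) + 1, c) ∈ dark (rothe w) ↔
      ((r : ℕ) + 1, c) ∈
        darkStep (rothe w) (darkAux (rothe w) n (n - 1 - r)) ((r : ℕ) + 1) := by
  rw [← darkAux_eq_dark rowBound_rothe_le,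
    mem_darkAux_iff_of_le (k := n - 1 - r + 1) (by omega) (by simp only; omega)]
  change _ ∈ darkStep _ _ (n - (n - 1 - r)) ↔ _
  rw [show n - (n - 1 - r) = (r : ℕ) + 1 by omega]

end Schensted

/-- during Schensted insertion of `w(n), …, w(1)`, if `w(r)` bumps
nothing from row one then row `r` of `snow(RD(w))` has no dark cloud, and if it
bumps the value `c` then `(r, c)` is a dark cloud of `snow(RD(w))`. -/
theorem dark_rothe_via_schensted (n : ℕ) (w : Equiv.Perm (Fin n)) (r : Fin n) :
    (bumpedFromRowOne w r = none → ∀ c, ((r : ℕ) + 1, c) ∉ dark (rothe w)) ∧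
    ∀ c : ℕ, bumpedFromRowOne w r = some c → ((r : ℕ) + 1, c) ∈ dark (rothe w) := by
  simp only [mem_dark_rothe_iff, darkStep_rothe_eq]
  refine ⟨fun hnone c hc => ?_, fun c hsome => ?_⟩
  · rw [hnone, Option.elim_none] at hc
    exact absurd (lt_fst_add_of_mem_darkAux hc) (by simp only; omega)
  · rw [hsome, Option.elim_some]
    exact Finset.mem_insert_self _ _

end
end
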